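/- arXiv:math/0702877 — 2 statements merged into one kernel-verified Lean document; each statement's English description precedes it below -/
import Mathlib

section
/- Let p be a prime and let n > 1 be an integer. Then there exists an integer m₀ ≥ n (depending on n and p) such that for every integer m ≥ m₀, every integer i ≥ 1, and every positive integer j not divisible by p, Σ_{h=0}^{i−1} (s_p(m,h,j) − s_p(n,h,j)) ≥ s_p(n,i,j). -/
/-- `sP p m i j` is the number of integers `k ≥ 0` with `p^k * j ≤ m * (i+1)`. -/
def sP (p m i j : ℕ) : ℕ :=
  ((Finset.range (m * (i + 1))).filter (fun k => p ^ k * j ≤ m * (i + 1))).card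

lemma lt_of_pow_mul_le {p j k N : ℕ} (hp : 2 ≤ p) (hj : 0 < j)
    (h : p ^ k * j ≤ N) : k < N := by
  have h1 : k < 2 ^ k := Nat.lt_two_pow_self
  have h2 : 2 ^ k ≤ p ^ k := Nat.pow_le_pow_left hp k
  have h3 : p ^ k ≤ p ^ k * j := Nat.le_mul_of_pos_right _ hj
  omega

lemma sP_mono {p j : ℕ} (hp : 2 ≤ p) (hj : 0 < j) {a b c d : ℕ}
    (h : a * (b + 1) ≤ c * (d + 1)) : sP p a b j ≤ sP p c d j := by
  apply Finset.card_le_card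
  intro k hk
  simp only [Finset.mem_filter, Finset.mem_range] at hk ⊢
  exact ⟨lt_of_pow_mul_le hp hj (hk.2.trans h), hk.2.trans h⟩

lemma sP_le (p a b j : ℕ) : sP p a b j ≤ a * (b + 1) := by
  calc sP p a b j ≤ (Finset.range (a * (b + 1))).card := Finset.card_filter_le _ _
    _ = a * (b + 1) := Finset.card_range _

lemma le_sP {p j : ℕ} (hp : 2 ≤ p) (hj : 0 < j) {t a b : ℕ}
    (h : ∀ k < t, p ^ k * j ≤ a * (b + 1)) : t ≤ sP p a b j := by
  have : Finset.range t ⊆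
      (Finset.range (a * (b + 1))).filter (fun k => p ^ k * j ≤ a * (b + 1)) := by
    intro k hk
    simp only [Finset.mem_range] at hk
    simp only [Finset.mem_filter, Finset.mem_range]
    exact ⟨lt_of_pow_mul_le hp hj (h k hk), h k hk⟩
  simpa [sP] using Finset.card_le_card this

/-- Theorem (divisor)(iii), arithmetic form: for every `n > 1` and prime `p` there exists
`m₀ ≥ n` such that for all `m ≥ m₀`, all `i ≥ 1`, and all positive `j` prime to `p`,
`Σ_{h=0}^{i−1}(s_p(m,h,j) − s_p(n,h,j)) ≥ s_p(n,i,j)`. -/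
theorem divisor_iii (p n : ℕ) (hp : p.Prime) (hn : n > 1) :
    ∃ m₀ : ℕ, m₀ ≥ n ∧ ∀ m : ℕ, m ≥ m₀ → ∀ i : ℕ, i ≥ 1 → ∀ j : ℕ, 0 < j → ¬ p ∣ j →
      (sP p n i j : ℤ) ≤
        ∑ h ∈ Finset.range i, ((sP p m h j : ℤ) - (sP p n h j : ℤ)) := by
  have hp2 : 2 ≤ p := hp.two_le
  refine ⟨2 * n * p ^ (3 * n), ?_, ?_⟩
  · have : 1 ≤ p ^ (3 * n) := Nat.one_le_pow _ _ (by omega)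
    nlinarith
  intro m hm i hi j hj _
  have hmn : 2 * n ≤ m := by
    have : 1 ≤ p ^ (3 * n) := Nat.one_le_pow _ _ (by omega)
    nlinarith
  induction i, hi using Nat.le_induction with
  | base =>
    -- need sP p n 1 j ≤ sP p m 0 j - sP p n 0 j
    rw [Finset.sum_range_one]
    rcases Nat.eq_zero_or_pos (sP p n 1 j) with h0 | h0
    · have := sP_mono hp2 hj (a := n) (b := 0) (c := m) (d := 0) (by nlinarith)
      rw [h0]
      push_cast
      omega
    · -- j ≤ 2n
      have hjn : j ≤ 2 * n := by
        obtain ⟨k, hk⟩ := Finset.card_pos.mp h0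
        simp only [Finset.mem_filter, Finset.mem_range] at hk
        have h1 : 1 * j ≤ p ^ k * j :=
          Nat.mul_le_mul_right _ (Nat.one_le_pow _ _ (by omega))
        omega
      have hb1 : sP p n 1 j ≤ 2 * n := by have := sP_le p n 1 j; omega
      have hb0 : sP p n 0 j ≤ n := by have := sP_le p n 0 j; omega
      have hbig : 3 * n ≤ sP p m 0 j := by
        apply le_sP hp2 hj
        intro k hk
        have h1 : p ^ k ≤ p ^ (3 * n) := Nat.pow_le_pow_right (by omega) (by omega)
        calc p ^ k * j ≤ p ^ (3 * n) * (2 * n) := Nat.mul_le_mul h1 hjn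
          _ = 2 * n * p ^ (3 * n) := by ring
          _ ≤ m := hm
          _ = m * (0 + 1) := by ring
      omega
  | succ i hi1 ih =>
    rw [Finset.sum_range_succ]
    have hstep : sP p n (i + 1) j ≤ sP p m i j := by
      apply sP_mono hp2 hj
      nlinarith
    have hstep' : (sP p n (i + 1) j : ℤ) ≤ (sP p m i j : ℤ) := by exact_mod_cast hstep
    linarith [ih]
end

section
/- Let p be a prime, let m > n ≥ 1 be integers, and let j be a positive integer not divisible by p such that (m−n)·j ≥ 2·m·n. Then for every integer i ≥ 0, Σ_{h=0}^{i−1} (s_p(m,h,j) − s_p(n,h,j)) ≥ s_p(n,i,j). -/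
lemma sP_eq_big (p m i j N : ℕ) (hp : 2 ≤ p) (hj : 0 < j) (hN : m * (i + 1) ≤ N) :
    sP p m i j = ((Finset.range N).filter (fun k => p ^ k * j ≤ m * (i + 1))).card := by
  unfold sP
  congr 1
  apply Finset.ext
  intro k
  simp only [Finset.mem_filter, Finset.mem_range]
  constructor
  · rintro ⟨hk, hle⟩; exact ⟨lt_of_lt_of_le hk hN, hle⟩
  · rintro ⟨hk, hle⟩
    refine ⟨?_, hle⟩
    calc k < 2 ^ k := Nat.lt_two_pow_self
    _ ≤ p ^ k := Nat.pow_le_pow_left hp k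
    _ ≤ p ^ k * j := Nat.le_mul_of_pos_right _ hj
    _ ≤ m * (i + 1) := hle

lemma key_lemma (m n j x t : ℕ) (hmn : m > n) (hn : 1 ≤ n)
    (hjbig : (m - n) * j ≥ 2 * m * n) (hjx : j ≤ x) (hx : x ≤ n * (t + 1)) :
    x ≤ m * t := by
  by_contra hlt
  push_neg at hlt
  have hd : (n : ℤ) < m := by exact_mod_cast hmn
  have h1 : ((m : ℤ) - n) * j ≥ 2 * m * n := by
    have h := hjbig
    zify [hmn.le] at h
    linarith
  have h2 : (x : ℤ) ≤ n * (t + 1) := by exact_mod_cast hx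
  have h3 : (m : ℤ) * t < x := by exact_mod_cast hlt
  have h4 : (j : ℤ) ≤ x := by exact_mod_cast hjx
  have hn' : (1 : ℤ) ≤ n := by exact_mod_cast hn
  have ht0 : (0 : ℤ) ≤ t := by positivity
  have hdt : ((m : ℤ) - n) * t ≤ n - 1 := by nlinarith
  have hdpos : (0 : ℤ) < (m : ℤ) - n := by linarith
  nlinarith [mul_le_mul_of_nonneg_left h2 hdpos.le,
             mul_le_mul_of_nonneg_left hdt (by linarith : (0 : ℤ) ≤ (n : ℤ)),
             mul_le_mul_of_nonneg_left h4 hdpos.le]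

/-- If `(m−n)·j ≥ 2mn` then the valuation inequality
`Σ_{h=0}^{i−1}(s_p(m,h,j) − s_p(n,h,j)) ≥ s_p(n,i,j)` holds for every `i ≥ 0`. -/
theorem large_j_case (p m n j : ℕ) (hp : p.Prime) (hmn : m > n) (hn : 1 ≤ n)
    (hj : 0 < j) (hpj : ¬ p ∣ j) (hjbig : (m - n) * j ≥ 2 * m * n) :
    ∀ i : ℕ, (sP p n i j : ℤ) ≤
      ∑ h ∈ Finset.range i, ((sP p m h j : ℤ) - (sP p n h j : ℤ)) := by
  intro i
  have hp2 : 2 ≤ p := hp.two_le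
  have hm0 : 0 < m := lt_trans hn hmn
  set N := m * (i + 1) with hNdef
  set A : ℕ → Finset ℕ :=
    fun h => (Finset.range N).filter (fun k => p ^ k * j ≤ m * (h + 1)) with hA
  set B : ℕ → Finset ℕ :=
    fun h => (Finset.range N).filter (fun k => p ^ k * j ≤ n * (h + 1)) with hB
  have hBA : ∀ h, B h ⊆ A h := by
    intro h k hk
    simp only [hA, hB, Finset.mem_filter] at *
    exact ⟨hk.1, le_trans hk.2 (Nat.mul_le_mul_right _ hmn.le)⟩
  have hsm : ∀ h, h < i → sP p m h j = (A h).card := by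
    intro h hh
    exact sP_eq_big p m h j N hp2 hj (Nat.mul_le_mul_left m (by omega))
  have hsn : ∀ h, h ≤ i → sP p n h j = (B h).card := by
    intro h hh
    exact sP_eq_big p n h j N hp2 hj (Nat.mul_le_mul hmn.le (by omega))
  rw [hsn i le_rfl]
  have hsum : ∑ h ∈ Finset.range i, ((sP p m h j : ℤ) - (sP p n h j : ℤ)) =
      ((∑ h ∈ Finset.range i, (A h \ B h).card : ℕ) : ℤ) := by
    push_cast
    apply Finset.sum_congr rfl
    intro h hh
    rw [Finset.mem_range] at hh
    rw [hsm h hh, hsn h hh.le, Finset.card_sdiff_of_subset (hBA h)]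
    rw [Nat.cast_sub (Finset.card_le_card (hBA h))]
  rw [hsum]
  rw [Nat.cast_le]
  calc (B i).card ≤ ((Finset.range i).biUnion (fun h => A h \ B h)).card := by
        apply Finset.card_le_card
        intro k hk
        simp only [hB, Finset.mem_filter, Finset.mem_range] at hk
        obtain ⟨hkN, hkle⟩ := hk
        set x := p ^ k * j with hx
        have hx1 : j ≤ x := Nat.le_mul_of_pos_left j (pow_pos (by omega : 0 < p) k)
        have hx0 : 0 < x := lt_of_lt_of_le hj hx1
        have hxm : x ≤ m * i := key_lemma m n j x i hmn hn hjbig hx1 hkle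
        set h := (x - 1) / m with hh
        have hhi : h < i := by
          rw [hh, Nat.div_lt_iff_lt_mul hm0]
          calc x - 1 < x := by omega
          _ ≤ m * i := hxm
          _ = i * m := Nat.mul_comm m i
        have hxmh : x ≤ m * (h + 1) := by
          have h1 : (x - 1) / m < h + 1 := Nat.lt_succ_self h
          rw [Nat.div_lt_iff_lt_mul hm0] at h1
          have h2 : x - 1 < m * (h + 1) := by rw [Nat.mul_comm]; exact h1
          omega
        have hnx : n * (h + 1) < x := by
          by_contra hc
          push_neg at hc
          have h1 : x ≤ m * h := key_lemma m n j x h hmn hn hjbig hx1 hc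
          have h2 : m * h ≤ x - 1 := by
            rw [hh, Nat.mul_comm]
            exact Nat.div_mul_le_self _ _
          omega
        rw [Finset.mem_biUnion]
        refine ⟨h, Finset.mem_range.mpr hhi, ?_⟩
        rw [Finset.mem_sdiff]
        constructor
        · simp only [hA, Finset.mem_filter, Finset.mem_range]
          exact ⟨hkN, hxmh⟩
        · simp only [hB, Finset.mem_filter, Finset.mem_range]
          intro hcon
          omega
  _ ≤ ∑ h ∈ Finset.range i, (A h \ B h).card := Finset.card_biUnion_le
end
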